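/- Let s ∈ (0,1), N ≥ 1, and G_R^+(x,y) = (k/2)·|x-y|^{2s-N}·∫_0^{ψ_R(x,y)} z^{s-1}/(z+1)^{N/2} dz with ψ_R(x,y) = (2x₁ - |x|²/R)(2y₁ - |y|²/R)/|x-y|², for any constant k > 0. If x, y are distinct points of the ball B_{R₀}^+ = {z : |z - (R₀,0,...,0)| < R₀}, then R ↦ G_R^+(x,y) is nondecreasing on [R₀, ∞) and converges, as R → ∞, to G_∞^+(x,y) = (k/2)·|x-y|^{2s-N}·∫_0^{4x₁y₁/|x-y|²} z^{s-1}/(z+1)^{N/2} dz. -/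

import Mathlib

open Real Filter

/-- `ψ_R(x,y) = (2x₁ - |x|²/R)(2y₁ - |y|²/R)/|x-y|²`. -/
noncomputable def psiR {N : ℕ} (hN : 0 < N) (R : ℝ) (x y : EuclideanSpace ℝ (Fin N)) : ℝ :=
  (2 * x ⟨0, hN⟩ - ‖x‖ ^ 2 / R) * (2 * y ⟨0, hN⟩ - ‖y‖ ^ 2 / R) / ‖x - y‖ ^ 2

/-- Green function of the ball `B_R^+` (up to the normalizing constant `k`). -/
noncomputable def GreenR {N : ℕ} (hN : 0 < N) (s k R : ℝ) (x y : EuclideanSpace ℝ (Fin N)) : ℝ :=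
  (k / 2) * ‖x - y‖ ^ (2 * s - (N : ℝ)) *
    ∫ z in (0:ℝ)..(psiR hN R x y), z ^ (s - 1) / (z + 1) ^ ((N : ℝ) / 2)

/-- Half-space Green function (up to the normalizing constant `k`). -/
noncomputable def GreenInf {N : ℕ} (hN : 0 < N) (s k : ℝ) (x y : EuclideanSpace ℝ (Fin N)) : ℝ :=
  (k / 2) * ‖x - y‖ ^ (2 * s - (N : ℝ)) *
    ∫ z in (0:ℝ)..(4 * x ⟨0, hN⟩ * y ⟨0, hN⟩ / ‖x - y‖ ^ 2),
      z ^ (s - 1) / (z + 1) ^ ((N : ℝ) / 2)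

/-!
Both Green functions are `(k/2) |x-y|^(2s-N) Φ(ψ)` for the same primitive
`Φ(t) = ∫₀ᵗ z^(s-1) (z+1)^(-N/2) dz`, which is nondecreasing and continuous on `[0, ∞)`.
For `x` in `B_{R₀}^+` one has `|x|² < 2R₀x₁`, so for `R ≥ R₀` each factor `2x₁ - |x|²/R` of `ψ_R`
is nonnegative, nondecreasing in `R`, and tends to `2x₁`; hence `ψ_R` increases to
`ψ_∞ = 4x₁y₁/|x-y|²`.
-/

open Set Topology

noncomputable def greenPrimitive (s p t : ℝ) : ℝ :=
  ∫ z in (0:ℝ)..t, z ^ (s - 1) / (z + 1) ^ p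

section greenPrimitive

variable {s : ℝ} (p : ℝ)

theorem intervalIntegrable_rpow_div_add_one_rpow (hs : 0 < s) {a b : ℝ} (ha : 0 ≤ a)
    (hb : 0 ≤ b) :
    IntervalIntegrable (fun z : ℝ => z ^ (s - 1) / (z + 1) ^ p) MeasureTheory.volume a b := by
  have hsing : IntervalIntegrable (fun z : ℝ => z ^ (s - 1)) MeasureTheory.volume a b :=
    intervalIntegral.intervalIntegrable_rpow' (by linarith)
  have hcont : ContinuousOn (fun z : ℝ => ((z + 1) ^ p)⁻¹) (uIcc a b) := by
    intro z hz
    have hz₀ : 0 ≤ z := by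
      rcases mem_uIcc.mp hz with h | h
      exacts [ha.trans h.1, hb.trans h.1]
    have hz₁ : 0 < z + 1 := by linarith
    exact ((continuousAt_id.add continuousAt_const).rpow_const (Or.inl hz₁.ne')).inv₀
      (rpow_pos_of_pos hz₁ p).ne' |>.continuousWithinAt
  simpa only [div_eq_mul_inv] using hsing.mul_continuousOn hcont

theorem greenPrimitive_monotoneOn (hs : 0 < s) : MonotoneOn (greenPrimitive s p) (Ici 0) := by
  intro a ha b hb hab
  have hgap : 0 ≤ ∫ z in a..b, z ^ (s - 1) / (z + 1) ^ p :=
    intervalIntegral.integral_nonneg hab fun z hz => by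
      have hz₀ : 0 ≤ z := ha.trans hz.1
      positivity
  rw [greenPrimitive, greenPrimitive, ← intervalIntegral.integral_add_adjacent_intervals
    (intervalIntegrable_rpow_div_add_one_rpow p hs le_rfl ha)
    (intervalIntegrable_rpow_div_add_one_rpow p hs ha hb)]
  linarith

theorem Filter.Tendsto.greenPrimitive_comp {α : Type*} {l : Filter α} {ψ : α → ℝ} {T : ℝ}
    (hs : 0 < s) (hψ : Tendsto ψ l (𝓝 T)) (hψ₀ : ∀ᶠ a in l, 0 ≤ ψ a) :
    Tendsto (fun a => greenPrimitive s p (ψ a)) l (𝓝 (greenPrimitive s p T)) := by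
  have hcont : ContinuousWithinAt (greenPrimitive s p) (Icc 0 (T + 1)) T :=
    intervalIntegral.continuousWithinAt_primitive Real.volume_singleton
      (intervalIntegrable_rpow_div_add_one_rpow p hs (by simp) (le_max_left _ _))
  refine hcont.tendsto.comp (tendsto_nhdsWithin_iff.mpr ⟨hψ, ?_⟩)
  filter_upwards [hψ₀, hψ.eventually (ge_mem_nhds (lt_add_one T))] with a h₀ h₁
  exact ⟨h₀, h₁⟩

end greenPrimitive

theorem EuclideanSpace.sq_norm_lt_of_norm_sub_single_lt {ι : Type*} [Fintype ι] [DecidableEq ι]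
    {z : EuclideanSpace ℝ ι} {i : ι} {r : ℝ} (h : ‖z - EuclideanSpace.single i r‖ < r) :
    ‖z‖ ^ 2 < 2 * r * z i := by
  have hsq : ‖z - EuclideanSpace.single i r‖ ^ 2 = ‖z‖ ^ 2 - 2 * r * z i + r ^ 2 := by
    rw [norm_sub_sq_real, EuclideanSpace.inner_single_right, PiLp.norm_single,
      Real.norm_eq_abs, sq_abs, conj_trivial]
    ring
  nlinarith [pow_lt_pow_left₀ h (norm_nonneg _) two_ne_zero]

theorem sub_div_nonneg_of_le_mul {a q R₀ R : ℝ} (hR₀ : 0 < R₀) (hq₀ : 0 ≤ q) (hq : q ≤ a * R₀)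
    (hR : R₀ ≤ R) : 0 ≤ a - q / R := by
  rw [sub_nonneg, div_le_iff₀ (hR₀.trans_le hR)]
  nlinarith

theorem monotoneOn_sub_div {a q : ℝ} (hq : 0 ≤ q) : MonotoneOn (fun R => a - q / R) (Ioi 0) :=
  fun _ hR₁ _ _ h => sub_le_sub_left (div_le_div_of_nonneg_left hq hR₁ h) a

theorem tendsto_sub_div_atTop (a q : ℝ) : Tendsto (fun R : ℝ => a - q / R) atTop (𝓝 a) := by
  simpa using (tendsto_const_nhds (x := a)).sub ((tendsto_const_nhds (x := q)).div_atTop tendsto_id)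

section psiR

variable {N : ℕ} (hN : 0 < N) {R₀ : ℝ} {x y : EuclideanSpace ℝ (Fin N)}

theorem psiR_nonneg (hR₀ : 0 < R₀) (hx : ‖x‖ ^ 2 ≤ 2 * R₀ * x ⟨0, hN⟩)
    (hy : ‖y‖ ^ 2 ≤ 2 * R₀ * y ⟨0, hN⟩) {R : ℝ} (hR : R₀ ≤ R) : 0 ≤ psiR hN R x y :=
  div_nonneg (mul_nonneg (sub_div_nonneg_of_le_mul hR₀ (sq_nonneg _) (by linarith) hR)
    (sub_div_nonneg_of_le_mul hR₀ (sq_nonneg _) (by linarith) hR)) (sq_nonneg _)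

theorem psiR_monotoneOn (hR₀ : 0 < R₀) (hx : ‖x‖ ^ 2 ≤ 2 * R₀ * x ⟨0, hN⟩)
    (hy : ‖y‖ ^ 2 ≤ 2 * R₀ * y ⟨0, hN⟩) :
    MonotoneOn (fun R => psiR hN R x y) (Ici R₀) := by
  have hpos : Ici R₀ ⊆ Ioi 0 := Ici_subset_Ioi.mpr hR₀
  intro R₁ h₁ R₂ h₂ h₁₂
  refine div_le_div_of_nonneg_right ?_ (sq_nonneg _)
  exact ((monotoneOn_sub_div (sq_nonneg _)).mono hpos).mul
    ((monotoneOn_sub_div (sq_nonneg _)).mono hpos)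
    (fun R hR => sub_div_nonneg_of_le_mul hR₀ (sq_nonneg _) (by linarith) hR)
    (fun R hR => sub_div_nonneg_of_le_mul hR₀ (sq_nonneg _) (by linarith) hR) h₁ h₂ h₁₂

theorem tendsto_psiR_atTop (x y : EuclideanSpace ℝ (Fin N)) :
    Tendsto (fun R => psiR hN R x y) atTop (𝓝 (4 * x ⟨0, hN⟩ * y ⟨0, hN⟩ / ‖x - y‖ ^ 2)) := by
  rw [show 4 * x ⟨0, hN⟩ * y ⟨0, hN⟩ = 2 * x ⟨0, hN⟩ * (2 * y ⟨0, hN⟩) by ring]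
  exact ((tendsto_sub_div_atTop _ _).mul (tendsto_sub_div_atTop _ _)).div_const _

end psiR

theorem GreenR_mono_tendsto_GreenInf_general (N : ℕ) (hN : 0 < N) (s : ℝ) (hs : s ∈ Set.Ioo (0:ℝ) 1)
    (k : ℝ) (hk : 0 < k) (R₀ : ℝ) (hR₀ : 0 < R₀)
    (x y : EuclideanSpace ℝ (Fin N))
    (hx : ‖x - (show EuclideanSpace ℝ (Fin N) from WithLp.toLp 2 (fun i => if i = (⟨0, hN⟩ : Fin N) then R₀ else 0))‖ < R₀)
    (hy : ‖y - (show EuclideanSpace ℝ (Fin N) from WithLp.toLp 2 (fun i => if i = (⟨0, hN⟩ : Fin N) then R₀ else 0))‖ < R₀) :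
    MonotoneOn (fun R => GreenR hN s k R x y) (Set.Ici R₀) ∧
    Tendsto (fun R => GreenR hN s k R x y) atTop (nhds (GreenInf hN s k x y)) := by
  have hcenter : (WithLp.toLp 2 fun i => if i = (⟨0, hN⟩ : Fin N) then R₀ else 0 :
      EuclideanSpace ℝ (Fin N)) = EuclideanSpace.single ⟨0, hN⟩ R₀ := by
    ext; simp
  rw [hcenter] at hx hy
  have hx' := (EuclideanSpace.sq_norm_lt_of_norm_sub_single_lt hx).le
  have hy' := (EuclideanSpace.sq_norm_lt_of_norm_sub_single_lt hy).le
  have hC : 0 ≤ k / 2 * ‖x - y‖ ^ (2 * s - (N : ℝ)) := by positivity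
  constructor
  · intro R₁ h₁ R₂ h₂ h₁₂
    exact mul_le_mul_of_nonneg_left (greenPrimitive_monotoneOn _ hs.1
      (psiR_nonneg hN hR₀ hx' hy' h₁) (psiR_nonneg hN hR₀ hx' hy' h₂)
      (psiR_monotoneOn hN hR₀ hx' hy' h₁ h₂ h₁₂)) hC
  · refine ((tendsto_psiR_atTop hN x y).greenPrimitive_comp _ hs.1 ?_).const_mul _
    filter_upwards [eventually_ge_atTop R₀] with R hR using psiR_nonneg hN hR₀ hx' hy' hR

theorem GreenR_mono_tendsto_GreenInf (N : ℕ) (hN : 0 < N) (s : ℝ) (hs : s ∈ Set.Ioo (0:ℝ) 1)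
    (k : ℝ) (hk : 0 < k) (R₀ : ℝ) (hR₀ : 0 < R₀)
    (x y : EuclideanSpace ℝ (Fin N)) (hxy : x ≠ y)
    (hx : ‖x - (show EuclideanSpace ℝ (Fin N) from WithLp.toLp 2 (fun i => if i = (⟨0, hN⟩ : Fin N) then R₀ else 0))‖ < R₀)
    (hy : ‖y - (show EuclideanSpace ℝ (Fin N) from WithLp.toLp 2 (fun i => if i = (⟨0, hN⟩ : Fin N) then R₀ else 0))‖ < R₀) :
    MonotoneOn (fun R => GreenR hN s k R x y) (Set.Ici R₀) ∧
    Tendsto (fun R => GreenR hN s k R x y) atTop (nhds (GreenInf hN s k x y)) :=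
  GreenR_mono_tendsto_GreenInf_general N hN s hs k hk R₀ hR₀ x y hx hy
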